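/- arXiv:1802.04741 — 2 statements merged into one kernel-verified Lean document; each statement's English description precedes it below -/
import Mathlib

section
/- Theorem 1, Part 2 (deterministic core): Let H be an r × N matrix over ZMod 2 and let F : (Fin N → ℝ) × (Fin r → ZMod 2) → (Fin N → ℝ) be an arbitrary function. Define the decoder soft output D(y) := sign(y) * F(|y|, H · bin(sign(y))) (componentwise product) for any y : Fin N → ℝ with nonzero components. Then for every codeword x^b with H · x^b = 0, with x = bipolar(x^b), and every noise vector z : Fin N → ℝ with nonzero components, D(x * z) = x * D(z). In particular the decoder output on channel output y = x*z equals the transmitted bipolar codeword multiplied componentwise by a quantity D(z) depending on the noise alone. -/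
/-- The bipolar map: `0 ↦ 1`, `1 ↦ −1`. -/
noncomputable def bipolar (b : ZMod 2) : ℝ := if b = 0 then 1 else -1

/-- Sign of a real number: `1` if positive, `−1` otherwise (only used on
nonzero reals). -/
noncomputable def sgn (t : ℝ) : ℝ := if 0 < t then 1 else -1

/-- The inverse of the bipolar map: `bin 1 = 0`, `bin (-1) = 1`. -/
noncomputable def bin (t : ℝ) : ZMod 2 := if t = 1 then 0 else 1

lemma sgn_bipolar_mul (b : ZMod 2) (t : ℝ) (ht : t ≠ 0) :
    sgn (bipolar b * t) = bipolar b * sgn t := by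
  rcases ht.lt_or_gt with h | h <;> unfold bipolar sgn <;>
    split_ifs with hb <;> simp_all <;> nlinarith

lemma abs_bipolar_mul (b : ZMod 2) (t : ℝ) :
    |bipolar b * t| = |t| := by
  unfold bipolar; split_ifs <;> simp

lemma bin_sgn_bipolar_mul (b : ZMod 2) (t : ℝ) (ht : t ≠ 0) :
    bin (sgn (bipolar b * t)) = b + bin (sgn t) := by
  rw [sgn_bipolar_mul b t ht]
  rcases (by decide : ∀ c : ZMod 2, c = 0 ∨ c = 1) b with hb | hb <;> subst hb <;>
    rcases ht.lt_or_gt with h | h <;>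
    unfold bipolar sgn bin <;> split_ifs <;>
    first | rfl | decide | linarith | simp_all

/-- Theorem 1, Part 2 (deterministic core): the syndrome-based decoder
`D(y) = sign(y) * F(|y|, H · bin(sign(y)))` satisfies `D(x * z) = x * D(z)`
for every bipolar codeword `x = bipolar(x^b)` with `H · x^b = 0` and every
noise vector `z` with nonzero components: its output is the transmitted
codeword times a quantity depending on the noise alone. -/
theorem decoder_output_noise_decomposition (r N : ℕ)
    (H : Matrix (Fin r) (Fin N) (ZMod 2))
    (F : (Fin N → ℝ) → (Fin r → ZMod 2) → (Fin N → ℝ))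
    (D : (Fin N → ℝ) → (Fin N → ℝ))
    (hD : ∀ y, D y = fun i =>
      sgn (y i) * F (fun j => |y j|) (H.mulVec (fun j => bin (sgn (y j)))) i)
    (xb : Fin N → ZMod 2) (hxb : H.mulVec xb = 0)
    (z : Fin N → ℝ) (hz : ∀ i, z i ≠ 0) :
    D (fun i => bipolar (xb i) * z i) = fun i => bipolar (xb i) * D z i := by
  rw [hD, hD]
  funext i
  have habs : (fun j => |bipolar (xb j) * z j|) = fun j => |z j| := by
    funext j; exact abs_bipolar_mul _ _
  have hbin : (fun j => bin (sgn (bipolar (xb j) * z j)))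
      = xb + fun j => bin (sgn (z j)) := by
    funext j; exact bin_sgn_bipolar_mul _ _ (hz j)
  rw [habs, hbin, Matrix.mulVec_add, hxb, zero_add,
    sgn_bipolar_mul _ _ (hz i), mul_assoc]
end

section
/- Theorem 1, Part 1 (Eq. (4), discrete version): Let G be an N × K matrix over ZMod 2 with injective associated linear map, H an r × N matrix over ZMod 2 with rank(H) = N − K and H · G = 0, and A a K × N matrix over ZMod 2 with A · G = I_K. Let (Ω, P) be a probability space carrying independent random variables M, uniformly distributed on (Fin K → ZMod 2), and Z, taking finitely many values in the set of vectors Fin N → ℝ with all components nonzero. Set X = bipolar(G · M) and Y = X * Z (componentwise). Then for every index i, every s ∈ {−1,1}, and every y : Fin N → ℝ with nonzero components such that P(Y = y) > 0: P(X_i = s · sign(y_i) − conditioned on Y = y) = P(sign(Z_i) = s − conditioned on the event { |Z| = |y| and H · bin(sign(Z)) = H · bin(sign(y)) }). That is, the pair (|y|, H·y^b) is a sufficient statistic: the posterior of each transmitted bit given the full channel output equals the posterior of the corresponding noise sign given only the reliabilities and the syndrome. -/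
open MeasureTheory ProbabilityTheory

lemma zmod2_cases (a : ZMod 2) : a = 0 ∨ a = 1 := by revert a; decide

lemma bipolar_cases (b : ZMod 2) : bipolar b = 1 ∨ bipolar b = -1 := by
  unfold bipolar; split <;> simp

lemma bipolar_mul_self (b : ZMod 2) : bipolar b * bipolar b = 1 := by
  rcases bipolar_cases b with h | h <;> rw [h] <;> norm_num

lemma bipolar_injective : Function.Injective bipolar := by
  intro a b h
  rcases zmod2_cases a with ha | ha <;> rcases zmod2_cases b with hb | hb <;>
    subst ha <;> subst hb <;> first | rfl | (simp [bipolar, show (1 : ZMod 2) ≠ 0 by decide] at h; norm_num at h)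

lemma bipolar_add (a b : ZMod 2) : bipolar (a + b) = bipolar a * bipolar b := by
  rcases zmod2_cases a with ha | ha <;> rcases zmod2_cases b with hb | hb <;>
    subst ha <;> subst hb <;>
    simp [bipolar, show (1 : ZMod 2) ≠ 0 by decide, show (1 + 1 : ZMod 2) = 0 by decide]

lemma sgn_cases (t : ℝ) : sgn t = 1 ∨ sgn t = -1 := by unfold sgn; split <;> simp

lemma sgn_mul_abs {t : ℝ} (h : t ≠ 0) : sgn t * |t| = t := by
  unfold sgn; split_ifs with h1
  · rw [abs_of_pos h1]; ring
  · rw [abs_of_neg (lt_of_le_of_ne (not_lt.mp h1) h)]; ring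

lemma sgn_neg {t : ℝ} (h : t ≠ 0) : sgn (-t) = - sgn t := by
  unfold sgn; rcases h.lt_or_gt with h1 | h1
  · simp [h1, not_lt.mpr h1.le, neg_pos.mpr h1]
  · simp [h1, not_lt.mpr (neg_nonpos.mpr h1.le)]

lemma sgn_pm_mul {a t : ℝ} (ha : a = 1 ∨ a = -1) (ht : t ≠ 0) :
    sgn (a * t) = a * sgn t := by
  rcases ha with h | h <;> subst h
  · simp
  · rw [neg_one_mul, neg_one_mul, sgn_neg ht]

lemma bin_bipolar (b : ZMod 2) : bin (bipolar b) = b := by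
  rcases zmod2_cases b with h | h <;> subst h <;>
    simp [bin, bipolar, show (1 : ZMod 2) ≠ 0 by decide] <;> norm_num

lemma bipolar_bin {t : ℝ} (h : t = 1 ∨ t = -1) : bipolar (bin t) = t := by
  rcases h with h | h <;> subst h <;>
    simp [bin, bipolar, show (1 : ZMod 2) ≠ 0 by decide] <;> norm_num

lemma bin_mul {a t : ℝ} (ha : a = 1 ∨ a = -1) (ht : t = 1 ∨ t = -1) :
    bin (a * t) = bin a + bin t := by
  rcases ha with h | h <;> rcases ht with h' | h' <;> subst h <;> subst h' <;>
    norm_num [bin] <;> decide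

lemma abs_bipolar (b : ZMod 2) : |bipolar b| = 1 := by
  rcases bipolar_cases b with h | h <;> rw [h] <;> norm_num

lemma ker_eq_range (N K r : ℕ) (G : Matrix (Fin N) (Fin K) (ZMod 2))
    (hG : Function.Injective G.mulVec)
    (H : Matrix (Fin r) (Fin N) (ZMod 2)) (hHrank : H.rank = N - K)
    (hHG : H * G = 0) :
    LinearMap.ker H.mulVecLin = LinearMap.range G.mulVecLin := by
  have hGinj : Function.Injective G.mulVecLin := hG
  have h1 : Module.finrank (ZMod 2) (LinearMap.range G.mulVecLin) = K := by
    rw [LinearMap.finrank_range_of_inj hGinj]; simp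
  have hKN : K ≤ N := by
    have h := LinearMap.finrank_le_finrank_of_injective hGinj
    simpa using h
  have hr : Module.finrank (ZMod 2) (LinearMap.range H.mulVecLin) = N - K := hHrank
  have hrk := LinearMap.finrank_range_add_finrank_ker (H.mulVecLin)
  have hN : Module.finrank (ZMod 2) (Fin N → ZMod 2) = N := by simp
  have h2 : Module.finrank (ZMod 2) (LinearMap.ker H.mulVecLin) = K := by
    rw [hr, hN] at hrk; omega
  have hle : LinearMap.range G.mulVecLin ≤ LinearMap.ker H.mulVecLin := by
    rintro x ⟨m, rfl⟩
    simp only [LinearMap.mem_ker, Matrix.mulVecLin_apply, Matrix.mulVec_mulVec, hHG,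
      Matrix.zero_mulVec]
  exact (Submodule.eq_of_le_of_finrank_le hle (by rw [h1, h2])).symm

/-- Theorem 1, Part 1 (Eq. (4), discrete version): the pair
`(|y|, H·y^b)` is a sufficient statistic — the posterior of each transmitted
bipolar bit given the full channel output `Y = y` equals the posterior of the
corresponding noise sign given only the reliabilities `|Z| = |y|` and the
syndrome `H · bin(sign(Z)) = H · bin(sign(y))`. -/
theorem posterior_eq_noise_posterior_given_reliabilities_and_syndrome
    (N K r : ℕ)
    (G : Matrix (Fin N) (Fin K) (ZMod 2)) (hG : Function.Injective G.mulVec)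
    (H : Matrix (Fin r) (Fin N) (ZMod 2)) (hHrank : H.rank = N - K)
    (hHG : H * G = 0)
    (A : Matrix (Fin K) (Fin N) (ZMod 2)) (hAG : A * G = 1)
    {Ω : Type*} [MeasurableSpace Ω] (P : Measure Ω) [IsProbabilityMeasure P]
    (M : Ω → (Fin K → ZMod 2)) (Z : Ω → (Fin N → ℝ))
    (hM : Measurable M) (hZ : Measurable Z)
    (hMunif : ∀ v : Fin K → ZMod 2, P {ω | M ω = v} = 1 / 2 ^ K)
    (hZfin : (Set.range Z).Finite)
    (hZne : ∀ ω i, Z ω i ≠ 0)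
    (hindep : IndepFun M Z P)
    (X : Ω → (Fin N → ℝ))
    (hX : ∀ ω i, X ω i = bipolar (G.mulVec (M ω) i))
    (Y : Ω → (Fin N → ℝ))
    (hY : ∀ ω i, Y ω i = X ω i * Z ω i) :
    ∀ (i : Fin N) (s : ℝ), (s = 1 ∨ s = -1) →
      ∀ y : Fin N → ℝ, (∀ j, y j ≠ 0) → 0 < P {ω | Y ω = y} →
        (P[|{ω | Y ω = y}]) {ω | X ω i = s * sgn (y i)} =
          (P[|{ω | (∀ j, |Z ω j| = |y j|) ∧
                H.mulVec (fun j => bin (sgn (Z ω j))) =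
                  H.mulVec (fun j => bin (sgn (y j)))}])
            {ω | sgn (Z ω i) = s} := by
  
  classical
  intro i s hs y hy hYpos
  set z : (Fin K → ZMod 2) → (Fin N → ℝ) :=
    fun m j => bipolar (G.mulVec m j) * y j with hzdef
  have hzinj : Function.Injective z := by
    intro m m' h
    apply hG
    funext j
    exact bipolar_injective (mul_right_cancel₀ (hy j) (congrFun h j))
  set S : Finset (Fin K → ZMod 2) :=
    Finset.univ.filter (fun m => bipolar (G.mulVec m i) = s * sgn (y i)) with hSdef
  -- measurability of pieces
  have hMm : ∀ m, MeasurableSet {ω | M ω = m} := fun m => hM (measurableSet_singleton m)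
  have hZz : ∀ v : Fin N → ℝ, MeasurableSet {ω | Z ω = v} :=
    fun v => hZ (measurableSet_singleton v)
  -- characterization of Y = y
  have hcharY : ∀ ω, Y ω = y ↔ Z ω = z (M ω) := by
    intro ω
    constructor
    · intro h
      funext j
      have h2 : bipolar (G.mulVec (M ω) j) * Z ω j = y j := by
        rw [← hX ω j, ← hY ω j]; exact congrFun h j
      have hb := bipolar_mul_self (G.mulVec (M ω) j)
      calc Z ω j = (bipolar (G.mulVec (M ω) j) * bipolar (G.mulVec (M ω) j)) * Z ω j := by
            rw [hb, one_mul]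
        _ = bipolar (G.mulVec (M ω) j) * (bipolar (G.mulVec (M ω) j) * Z ω j) := by ring
        _ = z (M ω) j := by rw [h2]
    · intro h
      funext j
      rw [hY ω j, hX ω j, congrFun h j]
      show bipolar (G.mulVec (M ω) j) * (bipolar (G.mulVec (M ω) j) * y j) = y j
      rw [← mul_assoc, bipolar_mul_self, one_mul]
  -- set equalities for the Y side
  have hEY : {ω | Y ω = y} =
      ⋃ m ∈ (Finset.univ : Finset (Fin K → ZMod 2)), ({ω | M ω = m} ∩ {ω | Z ω = z m}) := by
    ext ω
    simp only [Set.mem_setOf_eq, Set.mem_iUnion, Set.mem_inter_iff, Finset.mem_univ,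
      exists_true_left, true_and, exists_prop, hcharY ω]
    constructor
    · intro h; exact ⟨M ω, rfl, h⟩
    · rintro ⟨m, rfl, h⟩; exact h
  have hEY1 : {ω | Y ω = y} ∩ {ω | X ω i = s * sgn (y i)} =
      ⋃ m ∈ S, ({ω | M ω = m} ∩ {ω | Z ω = z m}) := by
    ext ω
    simp only [Set.mem_inter_iff, Set.mem_setOf_eq, Set.mem_iUnion, exists_prop, hcharY ω,
      hSdef, Finset.mem_filter, Finset.mem_univ, true_and, hX ω i]
    constructor
    · rintro ⟨h1, h2⟩; exact ⟨M ω, h2, rfl, h1⟩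
    · rintro ⟨m, h2, rfl, h1⟩; exact ⟨h1, h2⟩
  -- characterization of the B event
  have hker := ker_eq_range N K r G hG H hHrank hHG
  have hcharB : ∀ ω,
      ((∀ j, |Z ω j| = |y j|) ∧ H.mulVec (fun j => bin (sgn (Z ω j))) =
        H.mulVec (fun j => bin (sgn (y j)))) ↔ ∃ m, Z ω = z m := by
    intro ω
    constructor
    · rintro ⟨habs, hsyn⟩
      have hc : H.mulVec ((fun j => bin (sgn (Z ω j))) + (fun j => bin (sgn (y j)))) = 0 := by
        rw [Matrix.mulVec_add, hsyn]
        funext k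
        exact CharTwo.add_self_eq_zero _
      have hmem : ((fun j => bin (sgn (Z ω j))) + (fun j => bin (sgn (y j))))
          ∈ LinearMap.ker H.mulVecLin := hc
      rw [hker] at hmem
      obtain ⟨m, hm⟩ := hmem
      refine ⟨m, funext fun j => ?_⟩
      have hmj : G.mulVec m j = bin (sgn (Z ω j)) + bin (sgn (y j)) := congrFun hm j
      have hbj : bin (sgn (Z ω j)) = G.mulVec m j + bin (sgn (y j)) := by
        rw [hmj, add_assoc, CharTwo.add_self_eq_zero, add_zero]
      have hsz : sgn (Z ω j) = bipolar (G.mulVec m j) * sgn (y j) := by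
        have h := congrArg bipolar hbj
        rwa [bipolar_bin (sgn_cases _), bipolar_add, bipolar_bin (sgn_cases _)] at h
      calc Z ω j = sgn (Z ω j) * |Z ω j| := (sgn_mul_abs (hZne ω j)).symm
        _ = bipolar (G.mulVec m j) * sgn (y j) * |y j| := by rw [hsz, habs j]
        _ = bipolar (G.mulVec m j) * y j := by rw [mul_assoc, sgn_mul_abs (hy j)]
    · rintro ⟨m, hm⟩
      constructor
      · intro j
        rw [congrFun hm j]
        show |bipolar (G.mulVec m j) * y j| = |y j|
        rw [abs_mul, abs_bipolar, one_mul]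
      · have hsgn : (fun j => bin (sgn (Z ω j))) =
            (G.mulVec m) + (fun j => bin (sgn (y j))) := by
          funext j
          rw [congrFun hm j]
          show bin (sgn (bipolar (G.mulVec m j) * y j)) = _
          rw [sgn_pm_mul (bipolar_cases _) (hy j),
            bin_mul (bipolar_cases _) (sgn_cases _), bin_bipolar]
          rfl
        rw [hsgn, Matrix.mulVec_add, Matrix.mulVec_mulVec, hHG, Matrix.zero_mulVec, zero_add]
  have hEB : {ω | (∀ j, |Z ω j| = |y j|) ∧ H.mulVec (fun j => bin (sgn (Z ω j))) =
        H.mulVec (fun j => bin (sgn (y j)))} =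
      ⋃ m ∈ (Finset.univ : Finset (Fin K → ZMod 2)), {ω | Z ω = z m} := by
    ext ω
    simp only [Set.mem_setOf_eq, Set.mem_iUnion, Finset.mem_univ, exists_true_left,
      true_and, exists_prop, hcharB ω]
  have hkey : ∀ (ω : Ω) (m : Fin K → ZMod 2), Z ω = z m →
      (sgn (Z ω i) = s ↔ m ∈ S) := by
    intro ω m hm
    have hσ : sgn (y i) * sgn (y i) = 1 := by
      rcases sgn_cases (y i) with h | h <;> rw [h] <;> norm_num
    have hsz : sgn (Z ω i) = bipolar (G.mulVec m i) * sgn (y i) := by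
      rw [congrFun hm i]
      exact sgn_pm_mul (bipolar_cases _) (hy i)
    rw [hsz, hSdef, Finset.mem_filter]
    simp only [Finset.mem_univ, true_and]
    constructor
    · intro h
      calc bipolar (G.mulVec m i) = bipolar (G.mulVec m i) * (sgn (y i) * sgn (y i)) := by
            rw [hσ, mul_one]
        _ = (bipolar (G.mulVec m i) * sgn (y i)) * sgn (y i) := by ring
        _ = s * sgn (y i) := by rw [h]
    · intro h
      rw [h, mul_assoc, hσ, mul_one]
  have hEB1 : {ω | (∀ j, |Z ω j| = |y j|) ∧ H.mulVec (fun j => bin (sgn (Z ω j))) =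
        H.mulVec (fun j => bin (sgn (y j)))} ∩ {ω | sgn (Z ω i) = s} =
      ⋃ m ∈ S, {ω | Z ω = z m} := by
    ext ω
    simp only [Set.mem_inter_iff, Set.mem_setOf_eq, Set.mem_iUnion, exists_prop, hcharB ω]
    constructor
    · rintro ⟨⟨m, hm⟩, h2⟩
      exact ⟨m, (hkey ω m hm).mp h2, hm⟩
    · rintro ⟨m, hmS, hm⟩
      exact ⟨⟨m, hm⟩, (hkey ω m hm).mpr hmS⟩
  -- measure of the pieces
  have hprod : ∀ m, P ({ω | M ω = m} ∩ {ω | Z ω = z m}) =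
      (1 / 2 ^ K) * P {ω | Z ω = z m} := by
    intro m
    have h := hindep.measure_inter_preimage_eq_mul {m} {z m}
      (measurableSet_singleton _) (measurableSet_singleton _)
    have hpre1 : M ⁻¹' {m} = {ω | M ω = m} := rfl
    have hpre2 : Z ⁻¹' {z m} = {ω | Z ω = z m} := rfl
    rw [hpre1, hpre2, hMunif m] at h
    exact h
  have hsum1 : ∀ T : Finset (Fin K → ZMod 2),
      P (⋃ m ∈ T, ({ω | M ω = m} ∩ {ω | Z ω = z m})) =
        (1 / 2 ^ K) * ∑ m ∈ T, P {ω | Z ω = z m} := by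
    intro T
    rw [measure_biUnion_finset ?_ (fun m _ => (hMm m).inter (hZz _))]
    · rw [Finset.mul_sum]
      exact Finset.sum_congr rfl fun m _ => hprod m
    · intro m _ m' _ hne
      apply Set.disjoint_left.mpr
      rintro ω ⟨h1, _⟩ ⟨h2, _⟩
      exact hne (h1.symm.trans h2)
  have hsum2 : ∀ T : Finset (Fin K → ZMod 2),
      P (⋃ m ∈ T, {ω | Z ω = z m}) = ∑ m ∈ T, P {ω | Z ω = z m} := by
    intro T
    refine measure_biUnion_finset ?_ (fun m _ => hZz _)
    intro m _ m' _ hne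
    apply Set.disjoint_left.mpr
    rintro ω h1 h2
    exact hne (hzinj (h1.symm.trans h2))
  -- measurability of conditioning events
  have hEYmeas : MeasurableSet {ω | Y ω = y} := by
    rw [hEY]
    exact (Finset.univ : Finset (Fin K → ZMod 2)).measurableSet_biUnion
      (fun m _ => (hMm m).inter (hZz _))
  have hEBmeas : MeasurableSet {ω | (∀ j, |Z ω j| = |y j|) ∧
      H.mulVec (fun j => bin (sgn (Z ω j))) = H.mulVec (fun j => bin (sgn (y j)))} := by
    rw [hEB]
    exact (Finset.univ : Finset (Fin K → ZMod 2)).measurableSet_biUnion (fun m _ => hZz _)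
  -- put it together
  rw [cond_apply hEYmeas, cond_apply hEBmeas, hEY1, hEB1, hEY, hEB, hsum1, hsum1, hsum2, hsum2]
  have hc0 : (1 / 2 ^ K : ENNReal) ≠ 0 := by simp
  have hct : (1 / 2 ^ K : ENNReal) ≠ ⊤ := by simp
  rw [ENNReal.mul_inv (Or.inl hc0) (Or.inl hct), mul_mul_mul_comm,
    ENNReal.inv_mul_cancel hc0 hct, one_mul]
end
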